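/- arXiv:math/0603616 — 7 statements merged into one kernel-verified Lean document; each statement's English description precedes it below -/
import Mathlib

section
/- (Moreau–Rockafellar theorem.) Let E be a finite-dimensional real normed space and let f₁, …, f_k : E → ℝ be convex functions. Then for every a ∈ E, the subdifferential of the sum equals the Minkowski sum of the subdifferentials: ∂(f₁ + ⋯ + f_k)(a) = ∂f₁(a) + ⋯ + ∂f_k(a). -/
/-- The subdifferential of a convex function `f : E → ℝ` at a point `a`. -/
def subdifferential {E : Type*} [NormedAddCommGroup E] [NormedSpace ℝ E]
    (f : E → ℝ) (a : E) : Set (E →L[ℝ] ℝ) :=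
  {φ | ∀ x : E, φ (x - a) ≤ f x - f a}

/-!
The subgradients of a convex `f` at `a` are exactly the linear functionals lying below the
sublinear one-sided directional derivative `f'(a; ·)`. A subgradient `φ` of `∑ fᵢ` therefore
satisfies `φ ≤ ∑ fᵢ'(a; ·)`, and Hahn–Banach, applied on `E × Eᵏ` to the sublinear map
`(x, u) ↦ ∑ fᵢ'(a; uᵢ)` and to `φ` on the graph of the diagonal `x ↦ (x, …, x)`, splits `φ`
as `∑ ψᵢ` with `ψᵢ ≤ fᵢ'(a; ·)`. In finite dimension the `ψᵢ` are continuous.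
-/

open Set Filter Topology

theorem exists_sum_eq_of_le_sum_sublinear {ι E : Type*} [Fintype ι] [AddCommGroup E]
    [Module ℝ E] (p : ι → E → ℝ) (hp_smul : ∀ i (c : ℝ), 0 < c → ∀ x, p i (c • x) = c * p i x)
    (hp_add : ∀ i x y, p i (x + y) ≤ p i x + p i y) (φ : E →ₗ[ℝ] ℝ)
    (hφ : ∀ x, φ x ≤ ∑ i, p i x) :
    ∃ g : ι → E →ₗ[ℝ] ℝ, (∀ i x, g i x ≤ p i x) ∧ ∑ i, g i = φ := by
  classical
  have hp_zero : ∀ i, p i 0 = 0 := fun i => by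
    have h := hp_smul i 2 two_pos 0
    rw [smul_zero] at h
    linarith
  let N : E × (ι → E) → ℝ := fun z => ∑ i, p i (z.2 i)
  let D : E →ₗ[ℝ] E × (ι → E) := LinearMap.id.prod (LinearMap.pi fun _ => LinearMap.id)
  -- `φ ∘ fst` is defined on all of `E × (ι → E)`, so its restriction to the graph of the
  -- diagonal needs no chosen index (and `ι` may be empty).
  let ℓ : E × (ι → E) →ₗ.[ℝ] ℝ :=
    ⟨LinearMap.range D, (φ ∘ₗ LinearMap.fst ℝ E (ι → E)).domRestrict _⟩
  obtain ⟨Λ, hΛ_ext, hΛ_le⟩ := exists_extension_of_le_sublinear ℓ N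
    (fun c hc z => by simp [N, hp_smul _ c hc, Finset.mul_sum])
    (fun z w => by
      simpa [N, Finset.sum_add_distrib] using Finset.sum_le_sum fun i _ => hp_add i (z.2 i) (w.2 i))
    (by rintro ⟨_, y, rfl⟩; simpa [ℓ, N, D] using hφ y)
  have hΛ_fst : ∀ x, Λ (x, 0) = 0 := fun x => by
    have h₁ := hΛ_le (x, 0)
    have h₂ := hΛ_le (-(x, 0))
    rw [map_neg] at h₂
    simp [N, hp_zero] at h₁ h₂
    linarith
  refine ⟨fun i => Λ ∘ₗ LinearMap.inr ℝ E (ι → E) ∘ₗ LinearMap.single ℝ (fun _ => E) i,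
    fun i x => ?_, ?_⟩
  · simpa [N, Pi.apply_single (fun j => p j) hp_zero] using hΛ_le (0, Pi.single i x)
  · ext x
    have hΛ_diag : Λ (x, fun _ => x) = φ x := hΛ_ext ⟨D x, x, rfl⟩
    calc (∑ i, Λ ∘ₗ LinearMap.inr ℝ E (ι → E) ∘ₗ LinearMap.single ℝ (fun _ => E) i) x
        = Λ (∑ i, ((0 : E), Pi.single i x)) := by simp [← map_sum]
      _ = Λ ((x, fun _ => x) - (x, 0)) := by
          congr 1
          ext <;> simp [Prod.fst_sum, Prod.snd_sum]
      _ = φ x := by rw [map_sub, hΛ_diag, hΛ_fst, sub_zero]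

theorem tendsto_const_mul_nhdsGT_zero {c : ℝ} (hc : 0 < c) :
    Tendsto (c * ·) (𝓝[>] 0) (𝓝[>] 0) :=
  tendsto_nhdsWithin_iff.2
    ⟨((continuous_const_mul c).tendsto' 0 0 (mul_zero c)).mono_left nhdsWithin_le_nhds,
      eventually_nhdsWithin_of_forall fun _ ht => mul_pos hc ht⟩

section LineSlope

variable {E : Type*} [AddCommGroup E] [Module ℝ E]

noncomputable def lineSlope (f : E → ℝ) (a v : E) (t : ℝ) : ℝ := (f (a + t • v) - f a) / t

-- `f'(a; v)`: for convex `f` the slopes decrease as `t ↓ 0`, so this is their limit.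
noncomputable def rightLineDeriv (f : E → ℝ) (a v : E) : ℝ := sInf (lineSlope f a v '' Ioi 0)

theorem lineSlope_sum {ι : Type*} (s : Finset ι) (f : ι → E → ℝ) (a v : E) (t : ℝ) :
    lineSlope (fun x => ∑ i ∈ s, f i x) a v t = ∑ i ∈ s, lineSlope (f i) a v t := by
  simp only [lineSlope, ← Finset.sum_sub_distrib, Finset.sum_div]

theorem lineSlope_smul (f : E → ℝ) (a v : E) {c : ℝ} (hc : c ≠ 0) (t : ℝ) :
    lineSlope f a (c • v) t = c * lineSlope f a v (c * t) := by
  rcases eq_or_ne t 0 with rfl | ht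
  · simp [lineSlope]
  · simp only [lineSlope, smul_smul, mul_comm t c]
    field_simp

variable {f : E → ℝ}

theorem ConvexOn.monotoneOn_lineSlope (hf : ConvexOn ℝ univ f) (a v : E) :
    MonotoneOn (lineSlope f a v) {0}ᶜ := by
  have hline : ConvexOn ℝ univ (fun t : ℝ => f (a + t • v)) := by
    simpa [Function.comp_def] using
      (hf.translate_right a).comp_linearMap (LinearMap.toSpanSingleton ℝ E v)
  intro s hs t ht hst
  simpa [lineSlope] using hline.secant_mono (mem_univ 0) (mem_univ s) (mem_univ t) hs ht hst

theorem ConvexOn.bddBelow_lineSlope (hf : ConvexOn ℝ univ f) (a v : E) :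
    BddBelow (lineSlope f a v '' Ioi 0) :=
  ⟨lineSlope f a v (-1), forall_mem_image.2 fun _ ht =>
    hf.monotoneOn_lineSlope a v (by norm_num) (ne_of_gt ht) (by linarith [mem_Ioi.1 ht])⟩

theorem ConvexOn.tendsto_lineSlope (hf : ConvexOn ℝ univ f) (a v : E) :
    Tendsto (lineSlope f a v) (𝓝[>] 0) (𝓝 (rightLineDeriv f a v)) :=
  ((hf.monotoneOn_lineSlope a v).mono fun _ ht => ne_of_gt ht).tendsto_nhdsGT
    (hf.bddBelow_lineSlope a v)

theorem ConvexOn.rightLineDeriv_le_lineSlope (hf : ConvexOn ℝ univ f) (a v : E) {t : ℝ}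
    (ht : 0 < t) : rightLineDeriv f a v ≤ lineSlope f a v t :=
  csInf_le (hf.bddBelow_lineSlope a v) (mem_image_of_mem _ ht)

theorem ConvexOn.rightLineDeriv_smul (hf : ConvexOn ℝ univ f) (a v : E) {c : ℝ} (hc : 0 < c) :
    rightLineDeriv f a (c • v) = c * rightLineDeriv f a v := by
  refine tendsto_nhds_unique (hf.tendsto_lineSlope a (c • v)) ?_
  rw [funext (lineSlope_smul f a v hc.ne')]
  exact ((hf.tendsto_lineSlope a v).comp (tendsto_const_mul_nhdsGT_zero hc)).const_mul c

theorem ConvexOn.lineSlope_add_le (hf : ConvexOn ℝ univ f) (a u v : E) {t : ℝ} (ht : 0 < t) :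
    lineSlope f a (u + v) t ≤ lineSlope f a u (2 * t) + lineSlope f a v (2 * t) := by
  have hmid : f (a + t • (u + v)) ≤ (f (a + (2 * t) • u) + f (a + (2 * t) • v)) / 2 := by
    have h := hf.2 (mem_univ (a + (2 * t) • u)) (mem_univ (a + (2 * t) • v))
      (by norm_num : (0 : ℝ) ≤ 1 / 2) (by norm_num : (0 : ℝ) ≤ 1 / 2) (by norm_num)
    rw [show a + t • (u + v) = (1 / 2 : ℝ) • (a + (2 * t) • u) + (1 / 2 : ℝ) • (a + (2 * t) • v)
      by module]
    simp only [smul_eq_mul] at h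
    linarith
  calc lineSlope f a (u + v) t
      ≤ ((f (a + (2 * t) • u) + f (a + (2 * t) • v)) / 2 - f a) / t := by
        unfold lineSlope; gcongr
    _ = lineSlope f a u (2 * t) + lineSlope f a v (2 * t) := by
        unfold lineSlope; field_simp; ring

theorem ConvexOn.rightLineDeriv_add_le (hf : ConvexOn ℝ univ f) (a u v : E) :
    rightLineDeriv f a (u + v) ≤ rightLineDeriv f a u + rightLineDeriv f a v := by
  have h2 := tendsto_const_mul_nhdsGT_zero (two_pos (α := ℝ))
  exact le_of_tendsto_of_tendsto (hf.tendsto_lineSlope a (u + v))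
    (((hf.tendsto_lineSlope a u).comp h2).add ((hf.tendsto_lineSlope a v).comp h2))
    (eventually_nhdsWithin_of_forall fun t ht => hf.lineSlope_add_le a u v ht)

end LineSlope

section Subdifferential

variable {E : Type*} [NormedAddCommGroup E] [NormedSpace ℝ E] {f : E → ℝ} {a : E}
  {φ : E →L[ℝ] ℝ}

theorem le_lineSlope_of_mem_subdifferential (hφ : φ ∈ subdifferential f a) (v : E) {t : ℝ}
    (ht : 0 < t) : φ v ≤ lineSlope f a v t := by
  have h := hφ (a + t • v)
  rw [add_sub_cancel_left, map_smul, smul_eq_mul] at h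
  rw [lineSlope, le_div_iff₀ ht]
  linarith

theorem le_sum_rightLineDeriv_of_mem_subdifferential {ι : Type*} {s : Finset ι}
    {f : ι → E → ℝ} (hf : ∀ i ∈ s, ConvexOn ℝ univ (f i))
    (hφ : φ ∈ subdifferential (fun x => ∑ i ∈ s, f i x) a) (v : E) :
    φ v ≤ ∑ i ∈ s, rightLineDeriv (f i) a v :=
  ge_of_tendsto (tendsto_finsetSum s fun i hi => (hf i hi).tendsto_lineSlope a v)
    (eventually_nhdsWithin_of_forall fun t ht => by
      simpa only [lineSlope_sum] using le_lineSlope_of_mem_subdifferential hφ v ht)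

theorem ConvexOn.mem_subdifferential_of_le_rightLineDeriv (hf : ConvexOn ℝ univ f)
    (h : ∀ v, φ v ≤ rightLineDeriv f a v) : φ ∈ subdifferential f a := fun x => by
  simpa [lineSlope] using (h (x - a)).trans (hf.rightLineDeriv_le_lineSlope a (x - a) one_pos)

theorem sum_mem_subdifferential {ι : Type*} {s : Finset ι} {f : ι → E → ℝ}
    {g : ι → E →L[ℝ] ℝ} (hg : ∀ i ∈ s, g i ∈ subdifferential (f i) a) :
    ∑ i ∈ s, g i ∈ subdifferential (fun x => ∑ i ∈ s, f i x) a := fun x => by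
  simpa [Finset.sum_sub_distrib] using Finset.sum_le_sum fun i hi => hg i hi x

end Subdifferential

/-- Moreau–Rockafellar theorem: the subdifferential of a finite sum of convex functions
`f₁, …, f_k` on a finite-dimensional real normed space is the Minkowski sum of the
subdifferentials: `∂(f₁ + ⋯ + f_k)(a) = ∂f₁(a) + ⋯ + ∂f_k(a)`. -/
theorem moreau_rockafellar
    {E : Type*} [NormedAddCommGroup E] [NormedSpace ℝ E] [FiniteDimensional ℝ E]
    (k : ℕ) (f : Fin k → E → ℝ) (hf : ∀ i, ConvexOn ℝ Set.univ (f i)) (a : E) :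
    subdifferential (fun x => ∑ i, f i x) a =
      {φ : E →L[ℝ] ℝ | ∃ g : Fin k → (E →L[ℝ] ℝ),
        (∀ i, g i ∈ subdifferential (f i) a) ∧ φ = ∑ i, g i} := by
  ext φ
  constructor
  · intro hφ
    obtain ⟨g, hg_le, hg_sum⟩ := exists_sum_eq_of_le_sum_sublinear
      (fun i => rightLineDeriv (f i) a) (fun i _ hc v => (hf i).rightLineDeriv_smul a v hc)
      (fun i => (hf i).rightLineDeriv_add_le a) (φ : E →ₗ[ℝ] ℝ)
      (le_sum_rightLineDeriv_of_mem_subdifferential (fun i _ => hf i) hφ)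
    refine ⟨fun i => LinearMap.toContinuousLinearMap (g i),
      fun i => (hf i).mem_subdifferential_of_le_rightLineDeriv (hg_le i), ?_⟩
    ext v
    simpa using (LinearMap.congr_fun hg_sum v).symm
  · rintro ⟨g, hg, rfl⟩
    exact sum_mem_subdifferential fun i _ => hg i
end

section
/- For every n ≥ 1, the image of the cube [−1, 1]^{n+1} under the linear map ℝ^{n+1} → ℝ^n given by x ↦ (x(1) − x(n+1), x(2) − x(n+1), …, x(n) − x(n+1)) equals conv([0, 2]^n ∪ [−2, 0]^n). Consequently, the unit ball Z_n of M_Z^n is affinely equivalent to conv([0, 1]^n ∪ [−1, 0]^n). -/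
/-- The image of the cube `[−1, 1]^{n+1}` under the linear map
`x ↦ (x(1) − x(n+1), …, x(n) − x(n+1))` equals `conv([0, 2]^n ∪ [−2, 0]^n)`;
hence the unit ball `Z_n` of `M_Z^n` is affinely equivalent to
`conv([0, 1]^n ∪ [−1, 0]^n)`. -/
theorem image_cube_eq_conv_union_boxes (n : ℕ) (hn : 1 ≤ n) :
    (fun x : Fin (n + 1) → ℝ => fun i : Fin n => x i.castSucc - x (Fin.last n)) ''
        {x : Fin (n + 1) → ℝ | ∀ i, |x i| ≤ 1} =
      convexHull ℝ ({y : Fin n → ℝ | ∀ i, y i ∈ Set.Icc (0 : ℝ) 2}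
        ∪ {y : Fin n → ℝ | ∀ i, y i ∈ Set.Icc (-2 : ℝ) 0}) := by
  apply Set.Subset.antisymm
  · rintro y ⟨x, hx, rfl⟩
    set t := x (Fin.last n) with ht_def
    have ht : |t| ≤ 1 := hx (Fin.last n)
    rw [abs_le] at ht
    set p : Fin n → ℝ := fun i => x i.castSucc + 1 with hp_def
    set q : Fin n → ℝ := fun i => x i.castSucc - 1 with hq_def
    have hp : p ∈ {y : Fin n → ℝ | ∀ i, y i ∈ Set.Icc (0 : ℝ) 2} := by
      intro i
      have := hx i.castSucc
      rw [abs_le] at this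
      simp only [hp_def]
      exact ⟨by linarith [this.1], by linarith [this.2]⟩
    have hq : q ∈ {y : Fin n → ℝ | ∀ i, y i ∈ Set.Icc (-2 : ℝ) 0} := by
      intro i
      have := hx i.castSucc
      rw [abs_le] at this
      simp only [hq_def]
      exact ⟨by linarith [this.1], by linarith [this.2]⟩
    have h1 : p ∈ convexHull ℝ ({y : Fin n → ℝ | ∀ i, y i ∈ Set.Icc (0 : ℝ) 2}
        ∪ {y : Fin n → ℝ | ∀ i, y i ∈ Set.Icc (-2 : ℝ) 0}) :=
      subset_convexHull ℝ _ (Or.inl hp)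
    have h2 : q ∈ convexHull ℝ ({y : Fin n → ℝ | ∀ i, y i ∈ Set.Icc (0 : ℝ) 2}
        ∪ {y : Fin n → ℝ | ∀ i, y i ∈ Set.Icc (-2 : ℝ) 0}) :=
      subset_convexHull ℝ _ (Or.inr hq)
    have hcomb := (convex_convexHull ℝ ({y : Fin n → ℝ | ∀ i, y i ∈ Set.Icc (0 : ℝ) 2}
        ∪ {y : Fin n → ℝ | ∀ i, y i ∈ Set.Icc (-2 : ℝ) 0})) h1 h2
        (a := (1 - t) / 2) (b := (1 + t) / 2)
        (by linarith) (by linarith) (by ring)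
    convert hcomb using 1
    funext i
    simp only [Pi.add_apply, Pi.smul_apply, smul_eq_mul, hp_def, hq_def]
    ring
  · apply convexHull_min
    · rintro y (hy | hy)
      · refine ⟨Fin.snoc (fun i => y i - 1) (-1), ?_, ?_⟩
        · intro i
          refine Fin.lastCases ?_ ?_ i
          · simp [Fin.snoc_last]
          · intro j
            rw [Fin.snoc_castSucc, abs_le]
            have := hy j
            exact ⟨by linarith [this.1], by linarith [this.2]⟩
        · funext i
          simp [Fin.snoc_castSucc, Fin.snoc_last]
      · refine ⟨Fin.snoc (fun i => y i + 1) 1, ?_, ?_⟩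
        · intro i
          refine Fin.lastCases ?_ ?_ i
          · simp [Fin.snoc_last]
          · intro j
            rw [Fin.snoc_castSucc, abs_le]
            have := hy j
            exact ⟨by linarith [this.1], by linarith [this.2]⟩
        · funext i
          simp [Fin.snoc_castSucc, Fin.snoc_last]
    · rintro p ⟨x, hx, rfl⟩ q ⟨z, hz, rfl⟩ a b ha hb hab
      refine ⟨a • x + b • z, ?_, ?_⟩
      · intro i
        have h1 := hx i
        have h2 := hz i
        calc |(a • x + b • z) i| = |a * x i + b * z i| := by
              simp [Pi.add_apply, Pi.smul_apply, smul_eq_mul]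
          _ ≤ |a * x i| + |b * z i| := abs_add_le _ _
          _ = a * |x i| + b * |z i| := by
              rw [abs_mul, abs_mul, abs_of_nonneg ha, abs_of_nonneg hb]
          _ ≤ a * 1 + b * 1 := by
              gcongr
          _ = 1 := by linarith
      · funext i
        simp only [Pi.add_apply, Pi.smul_apply, smul_eq_mul]
        ring
end

section
/- Let n ≥ 1, let H = {x ∈ ℝ^{n+1} : Σᵢ x(i) = 0}, and let x ∈ H be nonzero with M := maxᵢ x(i) and m := minᵢ x(i). Then a linear functional φ on ℝ^{n+1} with Σ_{i=1}^{n+1} φ(e_i) = 0 satisfies ‖φ‖₁ = 1 and φ(x) = ½(M − m) = ‖x‖_Z if and only if: φ(e_i) ≥ 0 for every i with x(i) = M, φ(e_i) ≤ 0 for every i with x(i) = m, φ(e_i) = 0 for every i with m < x(i) < M, and Σ_{i : x(i) = M} φ(e_i) = ½ (equivalently Σ_{i : x(i) = m} φ(e_i) = −½). In other words, the norming functionals of x in M_Z^n are exactly the elements of F'(X) for the signed set X with X⁺ = {i : x(i) = M} and X⁻ = {i : x(i) = m}. -/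
open scoped Classical

/-- Characterization of the norming functionals of a nonzero `x` in the space `M_Z^n`:
a functional `φ` on `ℝ^{n+1}` (given by its coefficients, with `Σᵢ φ(i) = 0`) satisfies
`‖φ‖₁ = 1` and `φ(x) = ½(M − m) = ‖x‖_Z` (where `M = maxᵢ x(i)`, `m = minᵢ x(i)`) if and
only if `φ(i) ≥ 0` whenever `x(i) = M`, `φ(i) ≤ 0` whenever `x(i) = m`, `φ(i) = 0`
whenever `m < x(i) < M`, and `Σ_{i : x(i) = M} φ(i) = ½`. -/
theorem norming_functionals_of_MZ (n : ℕ) (hn : 1 ≤ n) (x : Fin (n + 1) → ℝ)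
    (hxH : ∑ i, x i = 0) (hx0 : x ≠ 0) (M m : ℝ)
    (hM : IsGreatest (Set.range x) M) (hm : IsLeast (Set.range x) m)
    (φ : Fin (n + 1) → ℝ) (hφ : ∑ i, φ i = 0) :
    ((∑ i, |φ i|) = 1 ∧ (∑ i, φ i * x i) = (M - m) / 2) ↔
      ((∀ i, x i = M → 0 ≤ φ i) ∧ (∀ i, x i = m → φ i ≤ 0) ∧
        (∀ i, m < x i → x i < M → φ i = 0) ∧
        (∑ i ∈ Finset.univ.filter fun i => x i = M, φ i) = 1 / 2) := by
  have hle : ∀ i, x i ≤ M := fun i => hM.2 ⟨i, rfl⟩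
  have hge : ∀ i, m ≤ x i := fun i => hm.2 ⟨i, rfl⟩
  obtain ⟨iM, hiM⟩ := hM.1
  have hmleM : m ≤ M := hiM ▸ hge iM
  have hmM : m < M := by
    rcases lt_or_eq_of_le hmleM with h | h
    · exact h
    · exfalso
      apply hx0
      have hall : ∀ i, x i = M := fun i => le_antisymm (hle i) (h ▸ hge i)
      have hsum : ∑ i, x i = (n + 1 : ℝ) * M := by
        rw [Finset.sum_congr rfl fun i _ => hall i]
        simp [Finset.sum_const, Finset.card_univ, mul_comm]
      have hM0 : M = 0 := by
        have hn1 : (n + 1 : ℝ) ≠ 0 := by positivity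
        have := hxH
        rw [hsum] at this
        exact (mul_eq_zero.mp this).resolve_left hn1
      funext i
      simp [hall i, hM0]
  set A := Finset.univ.filter (fun i => x i = M) with hA
  set B := Finset.univ.filter (fun i => x i = m) with hB
  have hdisj : Disjoint A B := by
    rw [Finset.disjoint_left]
    intro i hiA hiB
    rw [hA, Finset.mem_filter] at hiA
    rw [hB, Finset.mem_filter] at hiB
    exact absurd (hiA.2 ▸ hiB.2) hmM.ne'
  have hsplit : ∀ f : Fin (n + 1) → ℝ, (∀ i, x i ≠ M → x i ≠ m → f i = 0) →
      ∑ i, f i = ∑ i ∈ A, f i + ∑ i ∈ B, f i := by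
    intro f hf
    rw [← Finset.sum_union hdisj]
    refine (Finset.sum_subset (Finset.subset_univ _) fun i _ hi => ?_).symm
    rw [Finset.mem_union, hA, hB] at hi
    push_neg at hi
    simp only [Finset.mem_filter, Finset.mem_univ, true_and] at hi
    exact hf i hi.1 hi.2
  set c : ℝ := (M + m) / 2 with hc
  set r : ℝ := (M - m) / 2 with hr
  have hrpos : 0 < r := by rw [hr]; linarith
  constructor
  · rintro ⟨h1, h2⟩
    set g : Fin (n + 1) → ℝ := fun i => |φ i| * r - φ i * (x i - c) with hg
    have hg0 : ∀ i, 0 ≤ g i := by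
      intro i
      have h3 : φ i * (x i - c) ≤ |φ i| * |x i - c| := by
        calc φ i * (x i - c) ≤ |φ i * (x i - c)| := le_abs_self _
        _ = |φ i| * |x i - c| := abs_mul _ _
      have h4 : |x i - c| ≤ r := by
        rw [abs_le]
        constructor <;> [have := hge i; have := hle i] <;>
          simp only [hc, hr] at * <;> linarith
      have h5 : |φ i| * |x i - c| ≤ |φ i| * r :=
        mul_le_mul_of_nonneg_left h4 (abs_nonneg _)
      simp only [hg]
      linarith
    have hgsum : ∑ i, g i = 0 := by
      simp only [hg]
      rw [Finset.sum_sub_distrib]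
      have e1 : ∑ i, |φ i| * r = r := by rw [← Finset.sum_mul, h1, one_mul]
      have e2 : ∑ i, φ i * (x i - c) = r := by
        have : ∀ i, φ i * (x i - c) = φ i * x i - c * φ i := fun i => by ring
        rw [Finset.sum_congr rfl fun i _ => this i, Finset.sum_sub_distrib,
          ← Finset.mul_sum, hφ, h2, mul_zero, sub_zero, hr]
      rw [e1, e2, sub_self]
    have hgz : ∀ i, g i = 0 := by
      intro i
      have := (Finset.sum_eq_zero_iff_of_nonneg (fun i _ => hg0 i)).mp hgsum
      exact this i (Finset.mem_univ i)
    have heq : ∀ i, φ i * (x i - c) = |φ i| * r := by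
      intro i
      have := hgz i
      simp only [hg] at this
      linarith
    have hposA : ∀ i, x i = M → 0 ≤ φ i := by
      intro i hi
      have := heq i
      rw [hi] at this
      have hxc : M - c = r := by rw [hc, hr]; ring
      rw [hxc] at this
      have : φ i = |φ i| := mul_right_cancel₀ hrpos.ne' this
      rw [this]; exact abs_nonneg _
    have hnegB : ∀ i, x i = m → φ i ≤ 0 := by
      intro i hi
      have := heq i
      rw [hi] at this
      have hxc : m - c = -r := by rw [hc, hr]; ring
      rw [hxc] at this
      have h6 : (-φ i) * r = |φ i| * r := by linarith [this]
      have : -φ i = |φ i| := mul_right_cancel₀ hrpos.ne' h6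
      nlinarith [abs_nonneg (φ i)]
    have hmid : ∀ i, m < x i → x i < M → φ i = 0 := by
      intro i h7 h8
      by_contra hne
      have habs : 0 < |φ i| := abs_pos.mpr hne
      have h4 : |x i - c| < r := by
        rw [abs_lt]
        constructor <;> simp only [hc, hr] <;> linarith
      have : φ i * (x i - c) ≤ |φ i| * |x i - c| := by
        calc φ i * (x i - c) ≤ |φ i * (x i - c)| := le_abs_self _
        _ = |φ i| * |x i - c| := abs_mul _ _
      have h9 : |φ i| * |x i - c| < |φ i| * r := by
        exact mul_lt_mul_of_pos_left h4 habs
      have := heq i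
      linarith
    refine ⟨hposA, hnegB, hmid, ?_⟩
    have hzero : ∀ i, x i ≠ M → x i ≠ m → φ i = 0 := fun i h7 h8 =>
      hmid i (lt_of_le_of_ne (hge i) (Ne.symm h8)) (lt_of_le_of_ne (hle i) h7)
    have s1 : ∑ i, φ i = ∑ i ∈ A, φ i + ∑ i ∈ B, φ i := hsplit φ hzero
    have s2 : ∑ i, |φ i| = ∑ i ∈ A, φ i - ∑ i ∈ B, φ i := by
      have := hsplit (fun i => |φ i|) (fun i h7 h8 => by simp [hzero i h7 h8])
      rw [this]
      have eA : ∑ i ∈ A, |φ i| = ∑ i ∈ A, φ i := by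
        refine Finset.sum_congr rfl fun i hi => ?_
        rw [hA, Finset.mem_filter] at hi
        exact abs_of_nonneg (hposA i hi.2)
      have eB : ∑ i ∈ B, |φ i| = ∑ i ∈ B, -φ i := by
        refine Finset.sum_congr rfl fun i hi => ?_
        rw [hB, Finset.mem_filter] at hi
        exact abs_of_nonpos (hnegB i hi.2)
      rw [eA, eB, Finset.sum_neg_distrib]
      ring
    rw [hφ] at s1
    rw [h1] at s2
    rw [hA] at *
    linarith
  · rintro ⟨hposA, hnegB, hmid, hsumA⟩
    have hzero : ∀ i, x i ≠ M → x i ≠ m → φ i = 0 := fun i h7 h8 =>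
      hmid i (lt_of_le_of_ne (hge i) (Ne.symm h8)) (lt_of_le_of_ne (hle i) h7)
    have hsA : ∑ i ∈ A, φ i = 1 / 2 := hsumA
    have s1 : ∑ i, φ i = ∑ i ∈ A, φ i + ∑ i ∈ B, φ i := hsplit φ hzero
    rw [hφ, hsA] at s1
    have hsB : ∑ i ∈ B, φ i = -(1 / 2) := by linarith
    constructor
    · have := hsplit (fun i => |φ i|) (fun i h7 h8 => by simp [hzero i h7 h8])
      rw [this]
      have eA : ∑ i ∈ A, |φ i| = ∑ i ∈ A, φ i := by
        refine Finset.sum_congr rfl fun i hi => ?_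
        rw [hA, Finset.mem_filter] at hi
        exact abs_of_nonneg (hposA i hi.2)
      have eB : ∑ i ∈ B, |φ i| = ∑ i ∈ B, -φ i := by
        refine Finset.sum_congr rfl fun i hi => ?_
        rw [hB, Finset.mem_filter] at hi
        exact abs_of_nonpos (hnegB i hi.2)
      rw [eA, eB, Finset.sum_neg_distrib, hsA, hsB]
      ring
    · have := hsplit (fun i => φ i * x i) (fun i h7 h8 => by simp [hzero i h7 h8])
      rw [this]
      have eA : ∑ i ∈ A, φ i * x i = (∑ i ∈ A, φ i) * M := by
        rw [Finset.sum_mul]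
        refine Finset.sum_congr rfl fun i hi => ?_
        rw [hA, Finset.mem_filter] at hi
        rw [hi.2]
      have eB : ∑ i ∈ B, φ i * x i = (∑ i ∈ B, φ i) * m := by
        rw [Finset.sum_mul]
        refine Finset.sum_congr rfl fun i hi => ?_
        rw [hB, Finset.mem_filter] at hi
        rw [hi.2]
      rw [eA, eB, hsA, hsB]
      ring
end

section
/- Let n ≥ 1 and let X, Y be signed subsets of [n+1] with X⁺, X⁻, Y⁺, Y⁻ all nonempty. If X⁺ ∩ Y⁻ = ∅ and X⁻ ∩ Y⁺ ≠ ∅, then F'(X) ⊞ F'(Y) = F'(Z), where Z is the signed set with Z⁺ = X⁺ and Z⁻ = Y⁻. -/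
/-- The face `F'(X)` of the dual unit ball `Z_n*` corresponding to a signed set
`X = (P, M)`: functionals `φ` with `φ(i) ≥ 0` on `P`, `φ(i) ≤ 0` on `M`, `φ(i) = 0`
elsewhere, `Σ_{i ∈ P} φ(i) = ½` and `Σ_{i ∈ M} φ(i) = −½`. -/
def Fface {n : ℕ} (P M : Finset (Fin (n + 1))) : Set (Fin (n + 1) → ℝ) :=
  {φ | (∀ i ∈ P, 0 ≤ φ i) ∧ (∀ i ∈ M, φ i ≤ 0) ∧ (∀ i, i ∉ P → i ∉ M → φ i = 0) ∧
    (∑ i ∈ P, φ i) = 1 / 2 ∧ (∑ i ∈ M, φ i) = -(1 / 2)}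

/-- If `X` and `Y` are signed sets (all four parts nonempty) with `X⁺ ∩ Y⁻ = ∅` and
`X⁻ ∩ Y⁺ ≠ ∅`, then the reduced Minkowski sum `F'(X) ⊞ F'(Y)` (with respect to the
`ℓ₁` norm) equals `F'(Z)` for the signed set `Z = (X⁺, Y⁻)`. -/
theorem reducedSum_Fface (n : ℕ) (hn : 1 ≤ n) (Xp Xm Yp Ym : Finset (Fin (n + 1)))
    (hX : Disjoint Xp Xm) (hY : Disjoint Yp Ym)
    (hXp : Xp.Nonempty) (hXm : Xm.Nonempty) (hYp : Yp.Nonempty) (hYm : Ym.Nonempty)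
    (h₁ : Xp ∩ Ym = ∅) (h₂ : (Xm ∩ Yp).Nonempty) :
    {θ : Fin (n + 1) → ℝ | ∃ φ ∈ Fface Xp Xm, ∃ ψ ∈ Fface Yp Ym,
        θ = φ + ψ ∧ (∑ i, |θ i|) ≤ 1} = Fface Xp Ym := by
  have hdisjpm : Disjoint Xp Ym := Finset.disjoint_iff_inter_eq_empty.mpr h₁
  ext θ
  simp only [Set.mem_setOf_eq]
  constructor
  · rintro ⟨φ, ⟨hφp, hφm, hφ0, hφs, hφs'⟩, ψ, ⟨hψp, hψm, hψ0, hψs, hψs'⟩, rfl, hnorm⟩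
    have hψXp : ∀ i ∈ Xp, 0 ≤ ψ i := by
      intro i hi
      by_cases hYpi : i ∈ Yp
      · exact hψp i hYpi
      · have hYmi : i ∉ Ym := fun h =>
          (Finset.eq_empty_iff_forall_notMem.mp h₁ i) (Finset.mem_inter.mpr ⟨hi, h⟩)
        rw [hψ0 i hYpi hYmi]
    have hφYm : ∀ i ∈ Ym, φ i ≤ 0 := by
      intro i hi
      by_cases hXmi : i ∈ Xm
      · exact hφm i hXmi
      · have hXpi : i ∉ Xp := fun h =>
          (Finset.eq_empty_iff_forall_notMem.mp h₁ i) (Finset.mem_inter.mpr ⟨h, hi⟩)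
        rw [hφ0 i hXpi hXmi]
    have hθXp : ∀ i ∈ Xp, 0 ≤ (φ + ψ) i := fun i hi => add_nonneg (hφp i hi) (hψXp i hi)
    have hθYm : ∀ i ∈ Ym, (φ + ψ) i ≤ 0 := fun i hi => add_nonpos (hφYm i hi) (hψm i hi)
    have hA0 : 0 ≤ ∑ i ∈ Xp, ψ i := Finset.sum_nonneg hψXp
    have hB0 : (∑ i ∈ Ym, φ i) ≤ 0 := Finset.sum_nonpos hφYm
    have hs1 : ∑ i ∈ Xp, (φ + ψ) i = 1 / 2 + ∑ i ∈ Xp, ψ i := by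
      simp [Finset.sum_add_distrib, hφs]
    have hs2 : ∑ i ∈ Ym, (φ + ψ) i = (∑ i ∈ Ym, φ i) - 1 / 2 := by
      simp only [Pi.add_apply, Finset.sum_add_distrib, hψs']
      ring
    have habs : ∑ i ∈ Xp ∪ Ym, |(φ + ψ) i| ≤ ∑ i, |(φ + ψ) i| :=
      Finset.sum_le_sum_of_subset_of_nonneg (Finset.subset_univ _)
        (fun i _ _ => abs_nonneg _)
    have hsplit : ∑ i ∈ Xp ∪ Ym, |(φ + ψ) i|
        = (∑ i ∈ Xp, |(φ + ψ) i|) + ∑ i ∈ Ym, |(φ + ψ) i| :=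
      Finset.sum_union hdisjpm
    have h1 : ∑ i ∈ Xp, (φ + ψ) i ≤ ∑ i ∈ Xp, |(φ + ψ) i| :=
      Finset.sum_le_sum fun i _ => le_abs_self _
    have h2 : -∑ i ∈ Ym, (φ + ψ) i ≤ ∑ i ∈ Ym, |(φ + ψ) i| := by
      rw [← Finset.sum_neg_distrib]
      exact Finset.sum_le_sum fun i _ => neg_le_abs _
    have hchain : (1 / 2 + ∑ i ∈ Xp, ψ i) - ((∑ i ∈ Ym, φ i) - 1 / 2) ≤ 1 := by
      calc (1 / 2 + ∑ i ∈ Xp, ψ i) - ((∑ i ∈ Ym, φ i) - 1 / 2)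
          = (∑ i ∈ Xp, (φ + ψ) i) - ∑ i ∈ Ym, (φ + ψ) i := by rw [hs1, hs2]
        _ ≤ (∑ i ∈ Xp, |(φ + ψ) i|) + ∑ i ∈ Ym, |(φ + ψ) i| := by linarith
        _ = ∑ i ∈ Xp ∪ Ym, |(φ + ψ) i| := hsplit.symm
        _ ≤ ∑ i, |(φ + ψ) i| := habs
        _ ≤ 1 := hnorm
    have hA : (∑ i ∈ Xp, ψ i) = 0 := by linarith
    have hB : (∑ i ∈ Ym, φ i) = 0 := by linarith
    have hunion1 : (1 : ℝ) ≤ ∑ i ∈ Xp ∪ Ym, |(φ + ψ) i| := by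
      rw [hsplit]
      have := hs1; have := hs2
      linarith
    have hrest : ∀ i, i ∉ Xp → i ∉ Ym → (φ + ψ) i = 0 := by
      have hsd : (∑ i ∈ Finset.univ \ (Xp ∪ Ym), |(φ + ψ) i|)
          + ∑ i ∈ Xp ∪ Ym, |(φ + ψ) i| = ∑ i, |(φ + ψ) i| :=
        Finset.sum_sdiff (Finset.subset_univ _)
      have hz : ∀ i ∈ Finset.univ \ (Xp ∪ Ym), |(φ + ψ) i| = 0 := by
        rw [← Finset.sum_eq_zero_iff_of_nonneg (fun i _ => abs_nonneg _)]
        linarith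
      intro i hi hi'
      have : i ∈ Finset.univ \ (Xp ∪ Ym) := by
        simp [Finset.mem_sdiff, Finset.mem_union, hi, hi']
      exact abs_eq_zero.mp (hz i this)
    refine ⟨hθXp, hθYm, hrest, ?_, ?_⟩
    · rw [hs1, hA]; ring
    · rw [hs2, hB]; ring
  · rintro ⟨hp, hm, h0, hs, hs'⟩
    obtain ⟨j, hj⟩ := h₂
    rw [Finset.mem_inter] at hj
    obtain ⟨hjXm, hjYp⟩ := hj
    have hjXp : j ∉ Xp := fun h => (Finset.disjoint_left.mp hX h) hjXm
    have hjYm : j ∉ Ym := fun h => (Finset.disjoint_left.mp hY hjYp) h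
    refine ⟨(fun i => if i ∈ Xp then θ i else if i = j then -(1 / 2) else 0),
      ⟨?_, ?_, ?_, ?_, ?_⟩,
      (fun i => if i ∈ Ym then θ i else if i = j then 1 / 2 else 0),
      ⟨?_, ?_, ?_, ?_, ?_⟩, ?_, ?_⟩
    · intro i hi; simpa [hi] using hp i hi
    · intro i hi
      have hiXp : i ∉ Xp := fun h => (Finset.disjoint_left.mp hX h) hi
      simp only [hiXp, if_false]
      split <;> norm_num
    · intro i hiXp hiXm
      have : i ≠ j := fun h => hiXm (h ▸ hjXm)
      simp [hiXp, this]
    · rw [Finset.sum_congr rfl (fun i hi => if_pos hi)]; exact hs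
    · have : ∀ i ∈ Xm, (if i ∈ Xp then θ i else if i = j then -(1 / 2 : ℝ) else 0)
          = if i = j then -(1 / 2 : ℝ) else 0 := by
        intro i hi
        have hiXp : i ∉ Xp := fun h => (Finset.disjoint_left.mp hX h) hi
        simp [hiXp]
      rw [Finset.sum_congr rfl this, Finset.sum_ite_eq' Xm j (fun _ => -(1 / 2 : ℝ)),
        if_pos hjXm]
    · intro i hi
      have hiYm : i ∉ Ym := fun h => (Finset.disjoint_left.mp hY hi) h
      simp only [hiYm, if_false]
      split <;> norm_num
    · intro i hi; simpa [hi] using hm i hi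
    · intro i hiYp hiYm
      have : i ≠ j := fun h => hiYp (h ▸ hjYp)
      simp [hiYm, this]
    · have : ∀ i ∈ Yp, (if i ∈ Ym then θ i else if i = j then (1 / 2 : ℝ) else 0)
          = if i = j then (1 / 2 : ℝ) else 0 := by
        intro i hi
        have hiYm : i ∉ Ym := fun h => (Finset.disjoint_left.mp hY hi) h
        simp [hiYm]
      rw [Finset.sum_congr rfl this, Finset.sum_ite_eq' Yp j (fun _ => (1 / 2 : ℝ)),
        if_pos hjYp]
    · rw [Finset.sum_congr rfl (fun i hi => if_pos hi)]; exact hs'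
    · funext i
      by_cases hiXp : i ∈ Xp
      · have hiYm : i ∉ Ym := fun h =>
          (Finset.eq_empty_iff_forall_notMem.mp h₁ i) (Finset.mem_inter.mpr ⟨hiXp, h⟩)
        have hij : i ≠ j := fun h => hjXp (h ▸ hiXp)
        simp [hiXp, hiYm, hij]
      · by_cases hiYm : i ∈ Ym
        · have hij : i ≠ j := fun h => hjYm (h ▸ hiYm)
          simp [hiXp, hiYm, hij]
        · by_cases hij : i = j
          · subst hij
            simp [hjXp, hjYm, h0 i hjXp hjYm]
          · simp [hiXp, hiYm, hij, h0 i hiXp hiYm]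
    · have hzero : ∀ i ∈ Finset.univ, i ∉ Xp ∪ Ym → |θ i| = 0 := by
        intro i _ hi
        rw [Finset.mem_union] at hi
        push_neg at hi
        rw [h0 i hi.1 hi.2, abs_zero]
      rw [← Finset.sum_subset (Finset.subset_univ (Xp ∪ Ym)) hzero,
        Finset.sum_union hdisjpm]
      have e1 : ∑ i ∈ Xp, |θ i| = ∑ i ∈ Xp, θ i :=
        Finset.sum_congr rfl fun i hi => abs_of_nonneg (hp i hi)
      have e2 : ∑ i ∈ Ym, |θ i| = ∑ i ∈ Ym, -θ i :=
        Finset.sum_congr rfl fun i hi => abs_of_nonpos (hm i hi)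
      rw [e1, e2, Finset.sum_neg_distrib, hs, hs']
      norm_num
end

section
/- Let n ≥ 1 and let X, Y be signed subsets of [n+1] with X⁺, X⁻, Y⁺, Y⁻ all nonempty. If X and Y are conformal, i.e., X⁺ ∩ Y⁻ = ∅ and X⁻ ∩ Y⁺ = ∅, then F'(X) ⊞ F'(Y) = ∅; that is, every φ ∈ F'(X) and ψ ∈ F'(Y) satisfy ‖φ + ψ‖₁ > 1. -/
lemma Fface_abs_sum {n : ℕ} {P M : Finset (Fin (n + 1))} (hPM : Disjoint P M)
    {φ : Fin (n + 1) → ℝ} (hφ : φ ∈ Fface P M) : ∑ i, |φ i| = 1 := by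
  obtain ⟨h1, h2, h3, h4, h5⟩ := hφ
  have hsub : P ∪ M ⊆ Finset.univ := Finset.subset_univ _
  have := Finset.sum_subset hsub (f := fun i => |φ i|) ?_
  · rw [← this, Finset.sum_union hPM]
    have e1 : ∑ i ∈ P, |φ i| = ∑ i ∈ P, φ i :=
      Finset.sum_congr rfl fun i hi => abs_of_nonneg (h1 i hi)
    have e2 : ∑ i ∈ M, |φ i| = ∑ i ∈ M, -φ i :=
      Finset.sum_congr rfl fun i hi => abs_of_nonpos (h2 i hi)
    rw [e1, e2, Finset.sum_neg_distrib, h4, h5]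
    norm_num
  · intro i _ hi
    rw [Finset.mem_union] at hi
    push_neg at hi
    simp [h3 i hi.1 hi.2]

/-- If the signed sets `X` and `Y` (all four parts nonempty) are conformal, i.e.
`X⁺ ∩ Y⁻ = ∅ = X⁻ ∩ Y⁺`, then the reduced Minkowski sum `F'(X) ⊞ F'(Y)` is empty:
every `φ ∈ F'(X)` and `ψ ∈ F'(Y)` satisfy `‖φ + ψ‖₁ > 1`. -/
theorem reducedSum_Fface_conformal_empty (n : ℕ) (hn : 1 ≤ n)
    (Xp Xm Yp Ym : Finset (Fin (n + 1)))
    (hX : Disjoint Xp Xm) (hY : Disjoint Yp Ym)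
    (hXp : Xp.Nonempty) (hXm : Xm.Nonempty) (hYp : Yp.Nonempty) (hYm : Ym.Nonempty)
    (h₁ : Xp ∩ Ym = ∅) (h₂ : Xm ∩ Yp = ∅) :
    ∀ φ ∈ Fface Xp Xm, ∀ ψ ∈ Fface Yp Ym, 1 < ∑ i, |φ i + ψ i| := by
  intro φ hφ ψ hψ
  have key : ∀ i, |φ i + ψ i| = |φ i| + |ψ i| := by
    intro i
    obtain ⟨hx1, hx2, hx3, -, -⟩ := hφ
    obtain ⟨hy1, hy2, hy3, -, -⟩ := hψ
    have hsame : (0 ≤ φ i ∧ 0 ≤ ψ i) ∨ (φ i ≤ 0 ∧ ψ i ≤ 0) := by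
      by_cases hp : i ∈ Xp
      · left
        refine ⟨hx1 i hp, ?_⟩
        have him : i ∉ Ym := fun h => (Finset.eq_empty_iff_forall_notMem.mp h₁ i)
          (Finset.mem_inter.mpr ⟨hp, h⟩)
        by_cases hyp : i ∈ Yp
        · exact hy1 i hyp
        · rw [hy3 i hyp him]
      by_cases hm : i ∈ Xm
      · right
        refine ⟨hx2 i hm, ?_⟩
        have hyp : i ∉ Yp := fun h => (Finset.eq_empty_iff_forall_notMem.mp h₂ i)
          (Finset.mem_inter.mpr ⟨hm, h⟩)
        by_cases hym : i ∈ Ym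
        · exact hy2 i hym
        · rw [hy3 i hyp hym]
      · rw [hx3 i hp hm]
        rcases le_total 0 (ψ i) with h | h
        · exact Or.inl ⟨le_refl 0, h⟩
        · exact Or.inr ⟨le_refl 0, h⟩
    rcases hsame with ⟨h1, h2⟩ | ⟨h1, h2⟩
    · rw [abs_of_nonneg h1, abs_of_nonneg h2, abs_of_nonneg (add_nonneg h1 h2)]
    · rw [abs_of_nonpos h1, abs_of_nonpos h2, abs_of_nonpos (add_nonpos h1 h2)]
      ring
  simp only [key, Finset.sum_add_distrib, Fface_abs_sum hX hφ, Fface_abs_sum hY hψ]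
  norm_num
end

section
/- Let n ≥ 1 and let X₁, …, X_k be signed subsets of [n+1], each with X_i⁺ and X_i⁻ both nonempty, such that there do not exist indices a, b, c, d ∈ {1, …, k} with {a, b} ∩ {c, d} = ∅ and (X_a⁺ ∪ X_c⁺) ∩ (X_b⁻ ∪ X_d⁻) = ∅. Then k ≤ C(n+2, ⌊(n+2)/2⌋). Moreover, if k = C(n+2, ⌊(n+2)/2⌋), then X_i⁺ ∪ X_i⁻ = [n+1] for every i, and either every |X_i⁺| lies in {⌊(n+1)/2⌋, ⌊(n+1)/2⌋ + 1}, or every |X_i⁺| lies in {⌈(n+1)/2⌉ − 1, ⌈(n+1)/2⌉}. -/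
/-!
Write `i → j` when `X_i⁺ ∩ X_j⁻ = ∅`. The forbidden configuration says exactly that `→` has no
2-cycles and no transitive triangles `i → j → l, i → l` with `i ≠ j ≠ l`.

A ranking `π : [n+1] ≃ Fin (n+1)` separates `X_i` if it puts `X_i⁺` below `X_i⁻`; this happens
for at least a fraction `1 / C(|X_i⁺| + |X_i⁻|, |X_i⁺|)` of all rankings. Among the indices
separated by one ranking, `i → j` holds as soon as the top rank of `X_i⁺` is at most that of
`X_j⁺`, so at most two indices are separated, and counting pairs gives the LYM-type inequality
`∑ᵢ 1 / C(|X_i⁺| + |X_i⁻|, |X_i⁺|) ≤ 2`.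

Put `N = n + 1`. The full signed sets with `|X_i⁺| = ⌊N/2⌋` are pairwise distinct (a repeat is
a 2-cycle) and have weight `1 / C(N, ⌊N/2⌋)`; every other one has weight at least
`1 / C(N, ⌊N/2⌋ + 1)`. Hence `k ≤ C(N, ⌊N/2⌋) + C(N, ⌊N/2⌋ + 1) = C(N+1, ⌊(N+1)/2⌋)`. At equality
every weight is extremal, so all signed sets are full with `|X_i⁺|` in the three middle layers.
For even `N` every `N/2`-set is then some `X_i⁺`, so a member of the lower layer inside a member
of the upper layer would close a transitive triangle; a double count and the connectivity of
the exchange graph on `(N/2 - 1)`-sets show that the two outer layers cannot both occur.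
-/

open Finset

namespace Nat

theorem choose_succ_half (n : ℕ) : n.choose ((n + 1) / 2) = n.choose (n / 2) := by
  obtain ⟨m, rfl | rfl⟩ := n.even_or_odd'
  · congr 1; omega
  · rw [show (2 * m + 1 + 1) / 2 = m + 1 by omega, show (2 * m + 1) / 2 = m by omega,
      choose_symm_half]

theorem choose_eq_choose_min {n a : ℕ} (ha : a ≤ n) : n.choose a = n.choose (min a (n - a)) := by
  rcases le_total a (n - a) with h | h
  · rw [min_eq_left h]
  · rw [min_eq_right h, choose_symm ha]

theorem choose_lt_succ_of_lt_half_left {n m : ℕ} (hm : m < n / 2) :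
    n.choose m < n.choose (m + 1) := by
  have hpos : 0 < n.choose m := choose_pos (by omega)
  refine Nat.lt_of_mul_lt_mul_right (a := m + 1) ?_
  rw [choose_succ_right_eq]
  exact Nat.mul_lt_mul_of_pos_left (by omega) hpos

theorem strictMonoOn_choose_Iic_half (n : ℕ) : StrictMonoOn n.choose (Set.Iic (n / 2)) :=
  strictMonoOn_Iic_of_lt_succ fun _ hm => choose_lt_succ_of_lt_half_left hm

theorem choose_lt_choose_iff {n a b : ℕ} (ha : a ≤ n) (hb : b ≤ n) :
    n.choose a < n.choose b ↔ min a (n - a) < min b (n - b) := by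
  rw [choose_eq_choose_min ha, choose_eq_choose_min hb]
  exact (strictMonoOn_choose_Iic_half n).lt_iff_lt (by simp; omega) (by simp; omega)

theorem choose_le_middle_of_le {s n : ℕ} (a : ℕ) (hs : s ≤ n) :
    s.choose a ≤ n.choose (n / 2) :=
  calc s.choose a ≤ s.choose (s / 2) := choose_le_middle a s
    _ ≤ n.choose (s / 2) := choose_le_choose _ hs
    _ ≤ n.choose (n / 2) := choose_le_middle _ n

theorem choose_succ_half_eq_add (n : ℕ) :
    (n + 1).choose ((n + 1) / 2) = n.choose (n / 2) + n.choose (n / 2 + 1) := by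
  rw [← choose_succ_half, show (n + 1 + 1) / 2 = n / 2 + 1 by omega, choose_succ_succ']

theorem choose_le_choose_half_succ {N s a : ℕ} (hs : s ≤ N) (hmid : s = N → a ≠ N / 2) :
    s.choose a ≤ N.choose (N / 2 + 1) := by
  rcases hs.lt_or_eq with hs | rfl
  · obtain ⟨M, rfl⟩ : ∃ M, N = M + 1 := ⟨N - 1, by omega⟩
    calc s.choose a ≤ M.choose ((M + 1) / 2) :=
          choose_succ_half M ▸ choose_le_middle_of_le a (by omega)
      _ ≤ (M + 1).choose ((M + 1) / 2 + 1) := by rw [choose_succ_succ']; omega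
  · rcases le_or_gt a s with ha | ha
    · exact not_lt.1 fun h => (hmid rfl) (by rw [choose_lt_choose_iff (by omega) ha] at h; omega)
    · simp [choose_eq_zero_of_lt ha]

theorem eq_of_choose_eq_choose_half_succ {N s a : ℕ} (ha : 0 < a) (has : a < s) (hs : s ≤ N)
    (h : s.choose a = N.choose (N / 2 + 1)) : s = N ∧ (a = N / 2 + 1 ∨ a + N / 2 + 1 = N) := by
  obtain ⟨M, rfl⟩ : ∃ M, N = M + 1 := ⟨N - 1, by omega⟩
  have hs' : s = M + 1 := by
    by_contra hne
    have hpos : 0 < M.choose ((M + 1) / 2 + 1) := choose_pos (by omega)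
    have := choose_succ_half M ▸ choose_le_middle_of_le a (show s ≤ M by omega)
    rw [choose_succ_succ'] at h
    omega
  subst hs'
  refine ⟨rfl, ?_⟩
  have h1 := (choose_lt_choose_iff has.le (show (M + 1) / 2 + 1 ≤ M + 1 by omega)).not.mp h.not_lt
  have h2 := (choose_lt_choose_iff (show (M + 1) / 2 + 1 ≤ M + 1 by omega) has.le).not.mp h.not_gt
  omega

end Nat

theorem card_le_add_of_sum_inv_le_two {ι : Type*} [Fintype ι] (c : ι → ℚ) (S : Finset ι)
    {L₁ L₂ : ℚ} (hL₂ : 0 < L₂) (hL : L₂ ≤ L₁) (hS : ∀ i ∈ S, c i = L₁) (hSL : (#S : ℚ) ≤ L₁)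
    (hc : ∀ i ∉ S, 0 < c i ∧ c i ≤ L₂) (hsum : ∑ i, (c i)⁻¹ ≤ 2) :
    (Fintype.card ι : ℚ) ≤ L₁ + L₂ ∧
      ((Fintype.card ι : ℚ) = L₁ + L₂ → (∀ i ∉ S, c i = L₂) ∧ (L₂ < L₁ → (#S : ℚ) = L₁)) := by
  classical
  have hL₁ : 0 < L₁ := hL₂.trans_le hL
  have hterm : ∀ i ∈ Sᶜ, 0 ≤ (c i)⁻¹ - L₂⁻¹ := fun i hi =>
    sub_nonneg.2 (inv_anti₀ (hc i (mem_compl.1 hi)).1 (hc i (mem_compl.1 hi)).2)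
  set E := ∑ i ∈ Sᶜ, ((c i)⁻¹ - L₂⁻¹)
  have hE : 0 ≤ E := sum_nonneg hterm
  have hsplit : ∑ i, (c i)⁻¹ = #S / L₁ + #Sᶜ / L₂ + E := by
    rw [← sum_add_sum_compl S, sum_congr rfl fun i hi => by rw [hS i hi]]
    simp only [E, sum_sub_distrib, sum_const, nsmul_eq_mul]
    ring
  have hcard : (Fintype.card ι : ℚ) = #S + #Sᶜ := by
    rw [← Nat.cast_add, card_add_card_compl]
  have hD : 0 ≤ (L₁ - #S) * (L₂⁻¹ - L₁⁻¹) :=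
    mul_nonneg (by linarith) (sub_nonneg.2 (inv_anti₀ hL₂ hL))
  have key : (Fintype.card ι - (L₁ + L₂)) / L₂ + (L₁ - #S) * (L₂⁻¹ - L₁⁻¹) + E ≤ 0 := by
    have : (Fintype.card ι - (L₁ + L₂)) / L₂ + (L₁ - #S) * (L₂⁻¹ - L₁⁻¹) =
        #S / L₁ + #Sᶜ / L₂ - 2 := by
      rw [hcard]; field_simp; ring
    linarith
  refine ⟨?_, fun hk => ⟨fun i hi => ?_, fun hlt => ?_⟩⟩
  · have := (div_le_iff₀ hL₂).1 (show (Fintype.card ι - (L₁ + L₂)) / L₂ ≤ 0 by linarith)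
    linarith
  · rw [hk, sub_self, zero_div, zero_add] at key
    have hE0 := (sum_eq_zero_iff_of_nonneg hterm).1 (by linarith) i (mem_compl.2 hi)
    exact inv_injective (sub_eq_zero.1 hE0)
  · rw [hk, sub_self, zero_div, zero_add] at key
    have hinv : 0 < L₂⁻¹ - L₁⁻¹ := sub_pos.2 (inv_strictAnti₀ hL₂ hlt)
    nlinarith

theorem Finset.exists_le_le_of_two_lt_card {ι β : Type*} [DecidableEq ι] [LinearOrder β]
    (f : ι → β) {S : Finset ι} (hS : 2 < #S) :
    ∃ x ∈ S, ∃ y ∈ S, ∃ z ∈ S, x ≠ y ∧ y ≠ z ∧ f x ≤ f y ∧ f y ≤ f z := by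
  obtain ⟨x, hx, hxmin⟩ := S.exists_min_image f (card_pos.1 (by omega))
  obtain ⟨y, hy, hymin⟩ := (S.erase x).exists_min_image f
    (card_pos.1 (by rw [card_erase_of_mem hx]; omega))
  obtain ⟨z, hz⟩ := card_pos.1 (show 0 < #((S.erase x).erase y) by
    rw [card_erase_of_mem hy, card_erase_of_mem hx]; omega)
  exact ⟨x, hx, y, mem_of_mem_erase hy, z, mem_of_mem_erase (mem_of_mem_erase hz),
    (ne_of_mem_erase hy).symm, (ne_of_mem_erase hz).symm, hxmin y (mem_of_mem_erase hy),
    hymin z (mem_of_mem_erase hz)⟩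

theorem Finset.mem_of_exchange_closed {α : Type*} [DecidableEq α] {𝒟 : Finset (Finset α)}
    (hclosed : ∀ T ∈ 𝒟, ∀ x ∈ T, ∀ y ∉ T, insert y (T.erase x) ∈ 𝒟) {T₀ T : Finset α}
    (hT₀ : T₀ ∈ 𝒟) (hT : #T = #T₀) : T ∈ 𝒟 := by
  induction h : #(T \ T₀) generalizing T with
  | zero =>
    rwa [eq_of_subset_of_card_le (sdiff_eq_empty_iff_subset.1 (card_eq_zero.1 h)) hT.ge]
  | succ d ih =>
    obtain ⟨y, hy⟩ := card_pos.1 (show 0 < #(T \ T₀) by omega)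
    obtain ⟨x, hx⟩ := card_pos.1 (show 0 < #(T₀ \ T) by rw [← card_sdiff_comm hT]; omega)
    obtain ⟨hyT, hyT₀⟩ := mem_sdiff.1 hy
    obtain ⟨hxT₀, hxT⟩ := mem_sdiff.1 hx
    have hxT' : x ∉ T.erase y := fun h => hxT (mem_of_mem_erase h)
    have hT' : insert x (T.erase y) ∈ 𝒟 := by
      refine ih ?_ ?_
      · rw [card_insert_of_notMem hxT', card_erase_of_mem hyT, hT]
        have := card_pos.2 ⟨x, hxT₀⟩
        omega
      · rw [insert_sdiff_of_mem _ hxT₀, erase_sdiff_comm, card_erase_of_mem hy, h,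
          Nat.add_sub_cancel]
    have := hclosed _ hT' x (mem_insert_self x _) y
      (by simp [ne_of_mem_of_not_mem hyT hxT])
    rwa [erase_insert hxT', insert_erase hyT] at this

section SetFamilies

variable {α : Type*} [Fintype α] [DecidableEq α]

theorem Finset.compl_eq_of_card_add_card_eq {A B : Finset α} (h : Disjoint A B)
    (hcard : #A + #B = Fintype.card α) : Aᶜ = B :=
  IsCompl.compl_eq ⟨h, codisjoint_iff.2 ((card_eq_iff_eq_univ _).1
    ((card_union_of_disjoint h).trans hcard))⟩

theorem Finset.card_filter_superset_le (T : Finset α) (t : ℕ) :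
    #{S ∈ powersetCard t univ | T ⊆ S} ≤ (Fintype.card α - #T).choose (t - #T) := by
  rw [← card_compl, ← card_powersetCard]
  refine card_le_card_of_injOn (· \ T) (fun S hS => ?_) (fun S hS S' hS' h => ?_)
  · simp only [mem_coe, mem_filter, mem_powersetCard, subset_univ, true_and] at hS ⊢
    refine ⟨fun x hx => mem_compl.2 (mem_sdiff.1 hx).2, ?_⟩
    rw [card_sdiff_of_subset hS.2, hS.1]
  · simp only [mem_coe, mem_filter, mem_powersetCard, subset_univ, true_and] at hS hS'
    rw [← sdiff_union_of_subset hS.2, ← sdiff_union_of_subset hS'.2]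
    exact congrArg (· ∪ T) h

theorem forall_superset_mem_of_card_le {r t : ℕ} (hrt : r ≤ t) (hN : r + t = Fintype.card α)
    {𝒟 ℬ : Finset (Finset α)} (h𝒟 : ∀ T ∈ 𝒟, #T = r) (hℬ : ∀ S ∈ ℬ, #S = t)
    (hsub : ∀ S ∈ ℬ, ∀ T ⊆ S, #T = r → T ∈ 𝒟) (hcard : #𝒟 ≤ #ℬ) :
    ∀ T ∈ 𝒟, ∀ S, #S = t → T ⊆ S → S ∈ ℬ := by
  have hℬt : ℬ ⊆ powersetCard t univ := fun S hS =>
    mem_powersetCard.2 ⟨subset_univ S, hℬ S hS⟩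
  have hup : ∀ T ∈ 𝒟, #{S ∈ powersetCard t univ | T ⊆ S} ≤ t.choose r := fun T hT => by
    have := card_filter_superset_le T t
    rwa [h𝒟 T hT, show Fintype.card α - r = t by omega, Nat.choose_symm hrt] at this
  have hbelow : ∀ S ∈ ℬ, #{T ∈ 𝒟 | T ⊆ S} = t.choose r := fun S hS => by
    rw [← hℬ S hS, ← card_powersetCard]
    congr 1
    ext T
    simp only [mem_filter, mem_powersetCard]
    exact ⟨fun h => ⟨h.2, h𝒟 T h.1⟩, fun h => ⟨hsub S hS T h.1 h.2, h.1⟩⟩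
  have habove : ∀ T ∈ 𝒟, #{S ∈ ℬ | T ⊆ S} ≤ t.choose r := fun T hT =>
    (card_le_card (filter_subset_filter _ hℬt)).trans (hup T hT)
  -- double counting the pairs `T ⊆ S` with `T ∈ 𝒟`, `S ∈ ℬ` forces every bound `habove` to be sharp
  have hsharp : ∀ T ∈ 𝒟, #{S ∈ ℬ | T ⊆ S} = t.choose r := by
    refine (sum_eq_sum_iff_of_le habove).1 (le_antisymm (sum_le_sum habove) ?_)
    calc ∑ _T ∈ 𝒟, t.choose r = #𝒟 * t.choose r := by rw [sum_const, smul_eq_mul]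
      _ ≤ #ℬ * t.choose r := Nat.mul_le_mul_right _ hcard
      _ = ∑ S ∈ ℬ, #{T ∈ 𝒟 | T ⊆ S} := by rw [sum_congr rfl hbelow, sum_const, smul_eq_mul]
      _ = ∑ T ∈ 𝒟, #{S ∈ ℬ | T ⊆ S} := by
        have := sum_card_bipartiteAbove_eq_sum_card_bipartiteBelow (s := ℬ) (t := 𝒟)
          (r := fun S T => T ⊆ S)
        simpa only [bipartiteAbove, bipartiteBelow] using this
  intro T hT S hS hTS
  have hall : {S ∈ ℬ | T ⊆ S} = {S ∈ powersetCard t (univ : Finset α) | T ⊆ S} :=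
    eq_of_subset_of_card_le (filter_subset_filter _ hℬt) (by rw [hsharp T hT]; exact hup T hT)
  have : S ∈ {S ∈ ℬ | T ⊆ S} := by
    rw [hall]; exact mem_filter.2 ⟨mem_powersetCard.2 ⟨subset_univ S, hS⟩, hTS⟩
  exact (mem_filter.1 this).1

theorem eq_empty_or_eq_empty_of_forall_not_subset {r t : ℕ} (hrt : r < t)
    (hN : r + t = Fintype.card α) {𝒜 ℬ : Finset (Finset α)} (h𝒜 : ∀ T ∈ 𝒜, #T = r)
    (hℬ : ∀ S ∈ ℬ, #S = t) (hfree : ∀ T ∈ 𝒜, ∀ S ∈ ℬ, ¬ T ⊆ S)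
    (hcard : (Fintype.card α).choose r ≤ #𝒜 + #ℬ) : 𝒜 = ∅ ∨ ℬ = ∅ := by
  set 𝒟 := powersetCard r univ \ 𝒜
  have h𝒟 : ∀ T ∈ 𝒟, #T = r := fun T hT => (mem_powersetCard.1 (mem_sdiff.1 hT).1).2
  have hmem𝒟 : ∀ T, #T = r → T ∉ 𝒜 → T ∈ 𝒟 := fun T hT hT𝒜 =>
    mem_sdiff.2 ⟨mem_powersetCard.2 ⟨subset_univ T, hT⟩, hT𝒜⟩
  have hsub : ∀ S ∈ ℬ, ∀ T ⊆ S, #T = r → T ∈ 𝒟 := fun S hS T hTS hT =>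
    hmem𝒟 T hT fun hT𝒜 => hfree T hT𝒜 S hS hTS
  have hcard𝒟 : #𝒟 ≤ #ℬ := by
    rw [card_sdiff_of_subset fun T hT => mem_powersetCard.2 ⟨subset_univ T, h𝒜 T hT⟩,
      card_powersetCard, card_univ]
    omega
  have hup := forall_superset_mem_of_card_le hrt.le hN h𝒟 hℬ hsub hcard𝒟
  have hclosed : ∀ T ∈ 𝒟, ∀ x ∈ T, ∀ y ∉ T, insert y (T.erase x) ∈ 𝒟 := by
    intro T hT x hx y hy
    obtain ⟨S, hTS, -, hS⟩ := exists_subsuperset_card_eq (n := t)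
      (subset_univ (insert y T)) (by rw [card_insert_of_notMem hy, h𝒟 T hT]; omega)
      (by rw [card_univ]; omega)
    have hr : 0 < r := h𝒟 T hT ▸ card_pos.2 ⟨x, hx⟩
    refine hmem𝒟 _ (by rw [card_insert_of_notMem (fun h => hy (mem_of_mem_erase h)),
      card_erase_of_mem hx, h𝒟 T hT]; omega) fun hT𝒜 => ?_
    exact hfree _ hT𝒜 S (hup T hT S hS ((subset_insert y T).trans hTS))
      ((insert_subset_insert y (erase_subset x T)).trans hTS)
  rcases 𝒟.eq_empty_or_nonempty with h𝒟₀ | ⟨T₀, hT₀⟩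
  · refine Or.inr (eq_empty_of_forall_notMem fun S hS => ?_)
    obtain ⟨T, hTS, hT⟩ := exists_subset_card_eq (show r ≤ #S by rw [hℬ S hS]; exact hrt.le)
    simpa [h𝒟₀] using hsub S hS T hTS hT
  · refine Or.inl (eq_empty_of_forall_notMem fun T hT => ?_)
    exact (mem_sdiff.1 (mem_of_exchange_closed hclosed hT₀
      (by rw [h𝒜 T hT, h𝒟 T₀ hT₀]))).2 hT

end SetFamilies

section Rankings

variable {α : Type*} [DecidableEq α]

theorem Finset.exists_subset_card_eq_forall_lt {β : Type*} [LinearOrder β] {f : α → β}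
    (hf : Function.Injective f) (U : Finset α) {a : ℕ} (ha : a ≤ #U) :
    ∃ V ⊆ U, #V = a ∧ ∀ x ∈ V, ∀ y ∈ U \ V, f x < f y := by
  induction a with
  | zero => exact ⟨∅, empty_subset U, card_empty, by simp⟩
  | succ a ih =>
    obtain ⟨V, hVU, hV, hlt⟩ := ih (by omega)
    obtain ⟨m, hm, hmin⟩ := (U \ V).exists_min_image f
      (by rw [← card_pos, card_sdiff_of_subset hVU]; omega)
    refine ⟨insert m V, insert_subset (mem_sdiff.1 hm).1 hVU, ?_, fun x hx y hy => ?_⟩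
    · rw [card_insert_of_notMem (mem_sdiff.1 hm).2, hV]
    · rw [mem_sdiff, mem_insert, not_or] at hy
      have hy' : y ∈ U \ V := mem_sdiff.2 ⟨hy.1, hy.2.2⟩
      rcases mem_insert.1 hx with rfl | hx
      · exact (hmin y hy').lt_of_ne (hf.ne (Ne.symm hy.2.1))
      · exact hlt x hx y hy'

variable [Fintype α]

theorem exists_perm_mapsTo_of_card_eq {A C V W : Finset α} (hAC : Disjoint A C)
    (hVW : Disjoint V W) (hAV : #A = #V) (hCW : #C = #W) :
    ∃ σ : Equiv.Perm α, (∀ x ∈ A, σ x ∈ V) ∧ ∀ x ∈ C, σ x ∈ W := by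
  let e := (Equiv.Finset.union A C hAC).symm.trans
    (((Fintype.equivOfCardEq (by simpa using hAV) : A ≃ V).sumCongr
      (Fintype.equivOfCardEq (by simpa using hCW) : C ≃ W)).trans (Equiv.Finset.union V W hVW))
  refine ⟨e.extendSubtype, fun x hx => ?_, fun x hx => ?_⟩
  · rw [Equiv.extendSubtype_apply_of_mem e x (mem_union_left C hx)]
    simp [e, Equiv.Finset.union_symm_left hAC hx]
  · rw [Equiv.extendSubtype_apply_of_mem e x (mem_union_right A hx)]
    simp [e, Equiv.Finset.union_symm_right hAC hx]

def separatingRankings (A C : Finset α) : Finset (α ≃ Fin (Fintype.card α)) :=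
  {π | ∀ x ∈ A, ∀ y ∈ C, π x < π y}

theorem card_separatingRankings_le {A C V W : Finset α} (σ : Equiv.Perm α)
    (hA : ∀ x ∈ A, σ x ∈ V) (hC : ∀ x ∈ C, σ x ∈ W) :
    #(separatingRankings V W) ≤ #(separatingRankings A C) :=
  card_le_card_of_injOn (fun π => σ.trans π)
    (fun π hπ => by
      simp only [separatingRankings, coe_filter, mem_univ, true_and] at hπ ⊢
      exact fun x hx y hy => hπ _ (hA x hx) _ (hC y hy))
    (fun π _ π' _ h => Equiv.ext fun x => by simpa using DFunLike.congr_fun h (σ.symm x))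

theorem factorial_le_card_separatingRankings_mul_choose {A C : Finset α} (hAC : Disjoint A C) :
    (Fintype.card α).factorial ≤ #(separatingRankings A C) * (#A + #C).choose #A := by
  set U := A ∪ C
  have hU : #U = #A + #C := card_union_of_disjoint hAC
  have hcover : (univ : Finset (α ≃ Fin (Fintype.card α))) ⊆
      (U.powersetCard #A).biUnion fun V => separatingRankings V (U \ V) := by
    intro π _
    obtain ⟨V, hVU, hV, hlt⟩ :=
      U.exists_subset_card_eq_forall_lt π.injective (a := #A) (by omega)
    exact mem_biUnion.2
      ⟨V, mem_powersetCard.2 ⟨hVU, hV⟩, by simpa [separatingRankings] using hlt⟩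
  have hfiber : ∀ V ∈ U.powersetCard #A,
      #(separatingRankings V (U \ V)) ≤ #(separatingRankings A C) := by
    intro V hV
    obtain ⟨hVU, hV⟩ := mem_powersetCard.1 hV
    obtain ⟨σ, hσA, hσC⟩ := exists_perm_mapsTo_of_card_eq hAC disjoint_sdiff hV.symm
      (by rw [card_sdiff_of_subset hVU]; omega)
    exact card_separatingRankings_le σ hσA hσC
  calc (Fintype.card α).factorial = #(univ : Finset (α ≃ Fin (Fintype.card α))) := by
        rw [card_univ, Fintype.card_equiv (Fintype.equivFin α)]
    _ ≤ ∑ V ∈ U.powersetCard #A, #(separatingRankings V (U \ V)) :=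
        (card_le_card hcover).trans card_biUnion_le
    _ ≤ ∑ V ∈ U.powersetCard #A, #(separatingRankings A C) := sum_le_sum hfiber
    _ = #(separatingRankings A C) * (#A + #C).choose #A := by
        rw [sum_const, card_powersetCard, hU, smul_eq_mul, mul_comm]

theorem disjoint_of_sup_le_sup {A B C : Finset α} {π : α ≃ Fin (Fintype.card α)}
    (hπ : π ∈ separatingRankings A C)
    (h : B.sup (fun x => WithBot.some (π x)) ≤ A.sup fun x => WithBot.some (π x)) :
    Disjoint B C := by
  simp only [separatingRankings, mem_filter, mem_univ, true_and] at hπ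
  refine disjoint_left.2 fun e heB heC =>
    not_lt_of_ge (le_sup (f := fun x => WithBot.some (π x)) heB) ?_
  exact h.trans_lt ((Finset.sup_lt_iff (WithBot.bot_lt_coe _)).2 fun x hx =>
    WithBot.coe_lt_coe.2 (hπ x hx e heC))

end Rankings

section SignedFamily

variable {α ι : Type*} [DecidableEq α] {P M : ι → Finset α}

theorem eq_of_disjoint_of_disjoint
    (h : ¬ ∃ a b c d : ι, ({a, b} : Set ι) ∩ {c, d} = ∅ ∧ (P a ∪ P c) ∩ (M b ∪ M d) = ∅)
    (hdisj : ∀ i, Disjoint (P i) (M i)) (i j : ι) (hij : Disjoint (P i) (M j))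
    (hji : Disjoint (P j) (M i)) : i = j := by
  by_contra hne
  refine h ⟨i, i, j, j, by simp [hne], disjoint_iff_inter_eq_empty.1 ?_⟩
  simp only [disjoint_union_left, disjoint_union_right]
  exact ⟨⟨hdisj i, hji⟩, hij, hdisj j⟩

theorem not_disjoint_of_disjoint_of_disjoint
    (h : ¬ ∃ a b c d : ι, ({a, b} : Set ι) ∩ {c, d} = ∅ ∧ (P a ∪ P c) ∩ (M b ∪ M d) = ∅)
    (hdisj : ∀ i, Disjoint (P i) (M i)) (i j l : ι) (hij : i ≠ j) (hjl : j ≠ l)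
    (hPij : Disjoint (P i) (M j)) (hPjl : Disjoint (P j) (M l)) : ¬ Disjoint (P i) (M l) := by
  refine fun hPil => h ⟨j, j, i, l, by simp [hij.symm, hjl], disjoint_iff_inter_eq_empty.1 ?_⟩
  simp only [disjoint_union_left, disjoint_union_right]
  exact ⟨⟨hdisj j, hPij⟩, hPjl, hPil⟩

variable [Fintype α]

theorem disjoint_of_subset_of_card_add_card_eq {i j : ι} (hj : Disjoint (P j) (M j))
    (hfull : #(P j) + #(M j) = Fintype.card α) (h : P i ⊆ P j) : Disjoint (P i) (M j) := by
  rwa [← compl_eq_of_card_add_card_eq hj hfull, disjoint_compl_right_iff]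

theorem injOn_of_card_add_card_eq (hdisj : ∀ i, Disjoint (P i) (M i))
    (hcyc : ∀ i j, Disjoint (P i) (M j) → Disjoint (P j) (M i) → i = j) :
    Set.InjOn P {i | #(P i) + #(M i) = Fintype.card α} := fun i hi j hj h =>
  hcyc i j (disjoint_of_subset_of_card_add_card_eq (hdisj j) hj h.le)
    (disjoint_of_subset_of_card_add_card_eq (hdisj i) hi h.ge)

variable [Fintype ι]

theorem card_filter_mem_separatingRankings_le_two
    (htri : ∀ i j l, i ≠ j → j ≠ l → Disjoint (P i) (M j) → Disjoint (P j) (M l) →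
      ¬ Disjoint (P i) (M l))
    (π : α ≃ Fin (Fintype.card α)) : #{i | π ∈ separatingRankings (P i) (M i)} ≤ 2 := by
  classical
  by_contra! hS
  obtain ⟨x, -, y, hy, z, hz, hxy, hyz, hle, hle'⟩ :=
    exists_le_le_of_two_lt_card (fun i => (P i).sup fun x => WithBot.some (π x)) hS
  simp only [mem_filter, mem_univ, true_and] at hy hz
  exact htri x y z hxy hyz (disjoint_of_sup_le_sup hy hle) (disjoint_of_sup_le_sup hz hle')
    (disjoint_of_sup_le_sup hz (hle.trans hle'))

theorem sum_inv_choose_le_two (hdisj : ∀ i, Disjoint (P i) (M i))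
    (htri : ∀ i j l, i ≠ j → j ≠ l → Disjoint (P i) (M j) → Disjoint (P j) (M l) →
      ¬ Disjoint (P i) (M l)) :
    ∑ i, ((#(P i) + #(M i)).choose #(P i) : ℚ)⁻¹ ≤ 2 := by
  have hfac : (0 : ℚ) < (Fintype.card α).factorial := by positivity
  have hcount : ∑ i, #(separatingRankings (P i) (M i)) ≤ 2 * (Fintype.card α).factorial := by
    calc ∑ i, #(separatingRankings (P i) (M i))
        = ∑ π, #{i | π ∈ separatingRankings (P i) (M i)} := by
          simp only [separatingRankings, card_filter, mem_filter, mem_univ, true_and]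
          exact sum_comm
      _ ≤ ∑ _π : α ≃ Fin (Fintype.card α), 2 :=
          sum_le_sum fun π _ => card_filter_mem_separatingRankings_le_two htri π
      _ = 2 * (Fintype.card α).factorial := by
          rw [sum_const, card_univ, Fintype.card_equiv (Fintype.equivFin α), smul_eq_mul,
            mul_comm]
  refine le_of_mul_le_mul_right ?_ hfac
  calc (∑ i, ((#(P i) + #(M i)).choose #(P i) : ℚ)⁻¹) * (Fintype.card α).factorial
      ≤ ∑ i, (#(separatingRankings (P i) (M i)) : ℚ) := by
        rw [sum_mul]
        refine sum_le_sum fun i _ => (inv_mul_le_iff₀ ?_).2 ?_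
        · exact_mod_cast Nat.choose_pos (Nat.le_add_right _ _)
        exact_mod_cast (factorial_le_card_separatingRankings_mul_choose (hdisj i)).trans_eq
          (mul_comm _ _)
    _ ≤ 2 * (Fintype.card α).factorial := by exact_mod_cast hcount

variable (P M) in
def middleIndices : Finset ι :=
  {i | #(P i) + #(M i) = Fintype.card α ∧ #(P i) = Fintype.card α / 2}

theorem card_le_and_of_card_eq [Nonempty α] (hdisj : ∀ i, Disjoint (P i) (M i))
    (hcyc : ∀ i j, Disjoint (P i) (M j) → Disjoint (P j) (M i) → i = j)
    (htri : ∀ i j l, i ≠ j → j ≠ l → Disjoint (P i) (M j) → Disjoint (P j) (M l) →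
      ¬ Disjoint (P i) (M l)) :
    Fintype.card ι ≤ (Fintype.card α).choose (Fintype.card α / 2) +
        (Fintype.card α).choose (Fintype.card α / 2 + 1) ∧
      (Fintype.card ι = (Fintype.card α).choose (Fintype.card α / 2) +
          (Fintype.card α).choose (Fintype.card α / 2 + 1) →
        (∀ i ∉ middleIndices P M,
          (#(P i) + #(M i)).choose #(P i) = (Fintype.card α).choose (Fintype.card α / 2 + 1)) ∧
        ((Fintype.card α).choose (Fintype.card α / 2 + 1) <
            (Fintype.card α).choose (Fintype.card α / 2) →
          #(middleIndices P M) = (Fintype.card α).choose (Fintype.card α / 2))) := by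
  set N := Fintype.card α
  have hN : 0 < N := Fintype.card_pos
  have hle : ∀ i, #(P i) + #(M i) ≤ N := fun i =>
    card_union_of_disjoint (hdisj i) ▸ card_le_univ _
  have hmid : #(middleIndices P M) ≤ N.choose (N / 2) := by
    refine (card_le_card_of_injOn P (t := powersetCard (N / 2) univ) (fun i hi => ?_)
      ((injOn_of_card_add_card_eq hdisj hcyc).mono fun i hi => (mem_filter.1 hi).2.1)).trans_eq
      (by rw [card_powersetCard, card_univ])
    exact mem_powersetCard.2 ⟨subset_univ _, (mem_filter.1 hi).2.2⟩
  have key := card_le_add_of_sum_inv_le_two (fun i => ((#(P i) + #(M i)).choose #(P i) : ℚ))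
    (middleIndices P M) (L₁ := N.choose (N / 2)) (L₂ := N.choose (N / 2 + 1))
    (by exact_mod_cast Nat.choose_pos (by omega)) (by exact_mod_cast Nat.choose_le_middle _ _)
    (fun i hi => by rw [(mem_filter.1 hi).2.1, (mem_filter.1 hi).2.2])
    (by exact_mod_cast hmid)
    (fun i hi => ⟨by exact_mod_cast Nat.choose_pos (Nat.le_add_right _ _),
      by exact_mod_cast Nat.choose_le_choose_half_succ (hle i) fun hs ha =>
        hi (mem_filter.2 ⟨mem_univ i, hs, ha⟩)⟩)
    (sum_inv_choose_le_two hdisj htri)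
  exact_mod_cast key

theorem levels_of_card_eq_of_even (hdisj : ∀ i, Disjoint (P i) (M i))
    (hcyc : ∀ i j, Disjoint (P i) (M j) → Disjoint (P j) (M i) → i = j)
    (htri : ∀ i j l, i ≠ j → j ≠ l → Disjoint (P i) (M j) → Disjoint (P j) (M l) →
      ¬ Disjoint (P i) (M l))
    {m : ℕ} (hm : 0 < m) (hN : Fintype.card α = 2 * m)
    (hfull : ∀ i, #(P i) + #(M i) = Fintype.card α)
    (hlev : ∀ i, #(P i) = m - 1 ∨ #(P i) = m ∨ #(P i) = m + 1)
    (hmid : #{i | #(P i) = m} = (2 * m).choose m)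
    (hk : (2 * m).choose m + (2 * m).choose (m + 1) ≤ Fintype.card ι) :
    (∀ i, #(P i) = m ∨ #(P i) = m + 1) ∨ (∀ i, #(P i) = m - 1 ∨ #(P i) = m) := by
  classical
  have hinj : Function.Injective P := fun i j h =>
    injOn_of_card_add_card_eq hdisj hcyc (hfull i) (hfull j) h
  have hprec : ∀ i j, P i ⊆ P j → Disjoint (P i) (M j) := fun i j =>
    disjoint_of_subset_of_card_add_card_eq (hdisj j) (hfull j)
  have hsurj : ∀ T : Finset α, #T = m → ∃ i, P i = T := fun T hT => by
    obtain ⟨i, -, hi⟩ := surj_on_of_inj_on_of_card_le (s := {i | #(P i) = m})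
      (t := powersetCard m univ) (fun i _ => P i)
      (fun i hi => mem_powersetCard.2 ⟨subset_univ _, (mem_filter.1 hi).2⟩)
      (fun i j _ _ h => hinj h) (by rw [card_powersetCard, card_univ, hN, hmid])
      T (mem_powersetCard.2 ⟨subset_univ T, hT⟩)
    exact ⟨i, hi.symm⟩
  set 𝒜 := ({i | #(P i) = m - 1} : Finset ι).image P
  set ℬ := ({i | #(P i) = m + 1} : Finset ι).image P
  -- a member of the middle layer squeezed between `T ⊆ S` would close a transitive triangle
  have hfree : ∀ T ∈ 𝒜, ∀ S ∈ ℬ, ¬ T ⊆ S := by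
    simp only [𝒜, ℬ, mem_image, mem_filter, mem_univ, true_and]
    rintro _ ⟨t, ht, rfl⟩ _ ⟨u, hu, rfl⟩ htu
    obtain ⟨x, hx⟩ := card_pos.1 (show 0 < #(P u \ P t) by
      rw [card_sdiff_of_subset htu]; omega)
    obtain ⟨i, hi⟩ := hsurj (insert x (P t))
      (by rw [card_insert_of_notMem (mem_sdiff.1 hx).2]; omega)
    have hci : #(P i) = m := by rw [hi, card_insert_of_notMem (mem_sdiff.1 hx).2]; omega
    exact htri t i u (fun h => by subst h; omega) (fun h => by subst h; omega)
      (hprec t i (hi ▸ subset_insert x (P t)))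
      (hprec i u (hi ▸ insert_subset (mem_sdiff.1 hx).1 htu)) (hprec t u htu)
  have hcard : (Fintype.card α).choose (m - 1) ≤ #𝒜 + #ℬ := by
    have hsplit : univ.filter (fun i => ¬ #(P i) = m) =
        univ.filter (fun i => #(P i) = m - 1) ∪ univ.filter fun i => #(P i) = m + 1 := by
      rw [← filter_or]
      exact filter_congr fun i _ => by have := hlev i; omega
    have hcompl := card_filter_add_card_filter_not (s := univ) (fun i => #(P i) = m)
    rw [card_image_of_injective _ hinj, card_image_of_injective _ hinj,
      ← card_union_of_disjoint (disjoint_filter.2 fun i _ h => by omega), ← hsplit, hN,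
      Nat.choose_symm_of_eq_add (b := m + 1) (by omega)]
    rw [card_univ] at hcompl
    omega
  rcases eq_empty_or_eq_empty_of_forall_not_subset (r := m - 1) (t := m + 1) (by omega)
    (by omega) (by simp [𝒜]) (by simp [ℬ]) hfree hcard with h | h
  · refine Or.inl fun i => (hlev i).resolve_left fun hi => ?_
    exact notMem_empty _ (h ▸ mem_image_of_mem P (by simpa using hi) : P i ∈ (∅ : Finset _))
  · refine Or.inr fun i => ((hlev i).imp_right fun hi => hi.resolve_right fun hi' => ?_)
    exact notMem_empty _ (h ▸ mem_image_of_mem P (by simpa using hi') : P i ∈ (∅ : Finset _))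

theorem union_eq_univ_and_levels_of_card_eq [Nonempty α] (hdisj : ∀ i, Disjoint (P i) (M i))
    (hcyc : ∀ i j, Disjoint (P i) (M j) → Disjoint (P j) (M i) → i = j)
    (htri : ∀ i j l, i ≠ j → j ≠ l → Disjoint (P i) (M j) → Disjoint (P j) (M l) →
      ¬ Disjoint (P i) (M l))
    (hP : ∀ i, (P i).Nonempty) (hM : ∀ i, (M i).Nonempty)
    (hk : Fintype.card ι = (Fintype.card α + 1).choose ((Fintype.card α + 1) / 2)) :
    (∀ i, P i ∪ M i = univ) ∧
      ((∀ i, #(P i) = Fintype.card α / 2 ∨ #(P i) = Fintype.card α / 2 + 1) ∨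
        (∀ i, #(P i) = (Fintype.card α + 1) / 2 - 1 ∨ #(P i) = (Fintype.card α + 1) / 2)) := by
  set N := Fintype.card α
  rw [Nat.choose_succ_half_eq_add] at hk
  obtain ⟨hnon, hmid⟩ := (card_le_and_of_card_eq hdisj hcyc htri).2 hk
  have hshape : ∀ i ∉ middleIndices P M,
      #(P i) + #(M i) = N ∧ (#(P i) = N / 2 + 1 ∨ #(P i) + N / 2 + 1 = N) := fun i hi =>
    Nat.eq_of_choose_eq_choose_half_succ (card_pos.2 (hP i))
      (by have := card_pos.2 (hM i); omega)
      (card_union_of_disjoint (hdisj i) ▸ card_le_univ _) (hnon i hi)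
  have hfull : ∀ i, #(P i) + #(M i) = N := fun i => by
    by_cases hi : i ∈ middleIndices P M
    exacts [(mem_filter.1 hi).2.1, (hshape i hi).1]
  have hlev : ∀ i, #(P i) = N / 2 ∨ #(P i) = N / 2 + 1 ∨ #(P i) + N / 2 + 1 = N := fun i => by
    by_cases hi : i ∈ middleIndices P M
    exacts [Or.inl (mem_filter.1 hi).2.2, Or.inr (hshape i hi).2]
  refine ⟨fun i => (card_eq_iff_eq_univ _).1
    ((card_union_of_disjoint (hdisj i)).trans (hfull i)), ?_⟩
  obtain ⟨m, hm | hm⟩ := N.even_or_odd'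
  · have hm0 : 0 < m := by have : 0 < N := Fintype.card_pos; omega
    have hhalf : N / 2 = m := by omega
    have hmid' : #{i | #(P i) = m} = (2 * m).choose m := by
      rw [← hm, ← hhalf, ← hmid ((Nat.choose_lt_choose_iff (by omega) (by omega)).2 (by omega))]
      exact congrArg card (filter_congr fun i _ => by have := hfull i; omega)
    rw [hhalf, show (N + 1) / 2 = m by omega]
    exact levels_of_card_eq_of_even hdisj hcyc htri hm0 hm hfull
      (fun i => by have := hlev i; omega) hmid' (by rw [hk, hm, show 2 * m / 2 = m by omega])
  · exact Or.inl fun i => by have := hlev i; omega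

end SignedFamily

theorem signed_sets_extremal_general (n k : ℕ)
    (Xp Xm : Fin k → Finset (Fin (n + 1)))
    (hdisj : ∀ i, Disjoint (Xp i) (Xm i))
    (hp : ∀ i, (Xp i).Nonempty) (hm : ∀ i, (Xm i).Nonempty)
    (h : ¬ ∃ a b c d : Fin k, ({a, b} : Set (Fin k)) ∩ {c, d} = ∅ ∧
      (Xp a ∪ Xp c) ∩ (Xm b ∪ Xm d) = ∅) :
    k ≤ Nat.choose (n + 2) ((n + 2) / 2) ∧
      (k = Nat.choose (n + 2) ((n + 2) / 2) →
        (∀ i, Xp i ∪ Xm i = Finset.univ) ∧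
        ((∀ i, (Xp i).card = (n + 1) / 2 ∨ (Xp i).card = (n + 1) / 2 + 1) ∨
         (∀ i, (Xp i).card = (n + 2) / 2 - 1 ∨ (Xp i).card = (n + 2) / 2))) := by
  have hcyc := eq_of_disjoint_of_disjoint h hdisj
  have htri := not_disjoint_of_disjoint_of_disjoint h hdisj
  have hbound := (card_le_and_of_card_eq hdisj hcyc htri).1
  simp only [Fintype.card_fin, ← Nat.choose_succ_half_eq_add] at hbound
  refine ⟨hbound, fun hk => ?_⟩
  simpa only [Fintype.card_fin] using union_eq_univ_and_levels_of_card_eq hdisj hcyc htri hp hm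
    (by simp only [Fintype.card_fin]; exact hk)

/-- The extremal set-theoretic theorem behind `d(M_Z^n)`: if `X₁, …, X_k` are signed
subsets of `[n+1]` (both parts nonempty) such that there are no indices `a, b, c, d`
with `{a, b} ∩ {c, d} = ∅` and `(X_a⁺ ∪ X_c⁺) ∩ (X_b⁻ ∪ X_d⁻) = ∅`, then
`k ≤ C(n+2, ⌊(n+2)/2⌋)`, with the stated rigidity in the case of equality. -/
theorem signed_sets_extremal (n k : ℕ) (hn : 1 ≤ n)
    (Xp Xm : Fin k → Finset (Fin (n + 1)))
    (hdisj : ∀ i, Disjoint (Xp i) (Xm i))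
    (hp : ∀ i, (Xp i).Nonempty) (hm : ∀ i, (Xm i).Nonempty)
    (h : ¬ ∃ a b c d : Fin k, ({a, b} : Set (Fin k)) ∩ {c, d} = ∅ ∧
      (Xp a ∪ Xp c) ∩ (Xm b ∪ Xm d) = ∅) :
    k ≤ Nat.choose (n + 2) ((n + 2) / 2) ∧
      (k = Nat.choose (n + 2) ((n + 2) / 2) →
        (∀ i, Xp i ∪ Xm i = Finset.univ) ∧
        ((∀ i, (Xp i).card = (n + 1) / 2 ∨ (Xp i).card = (n + 1) / 2 + 1) ∨
         (∀ i, (Xp i).card = (n + 2) / 2 - 1 ∨ (Xp i).card = (n + 2) / 2))) :=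
  signed_sets_extremal_general n k Xp Xm hdisj hp hm h
end

section
/- Let n ≥ 1, let 0 < λ ≤ 1, and equip ℝ^n with the norm N(x) := ‖x‖₁ + λ‖x‖₂. Suppose p, q ∈ ℝ^n are nonzero and there is a coordinate i with p(i) > 0 and q(i) > 0. Then for every norming functional φ of p and every norming functional ψ of q (with respect to N), the dual norm of φ + ψ is strictly greater than 1; in particular, φ + ψ lies outside the dual unit ball of N. -/
lemma norming_coord_gt_one (n : ℕ) (lam : ℝ) (hlam0 : 0 < lam)
    (N : (Fin n → ℝ) → ℝ)
    (hN : ∀ x, N x = (∑ i, |x i|) + lam * Real.sqrt (∑ i, (x i) ^ 2))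
    (p : Fin n → ℝ) (i : Fin n) (hpi : 0 < p i)
    (φ : Fin n → ℝ)
    (h1 : ∀ x, (∑ j, φ j * x j) ≤ N x) (h2 : (∑ j, φ j * p j) = N p) :
    1 < φ i := by
  set y : Fin n → ℝ := fun j => if j = i then 0 else p j with hy
  have hsum1 : (∑ j, φ j * p j) - (∑ j, φ j * y j) = φ i * p i := by
    rw [← Finset.sum_sub_distrib]
    have : ∀ j, φ j * p j - φ j * y j = if j = i then φ i * p i else 0 := by
      intro j; by_cases h : j = i <;> simp [hy, h]
    simp [this]
  have habs : (∑ j, |p j|) - (∑ j, |y j|) = p i := by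
    rw [← Finset.sum_sub_distrib]
    have : ∀ j, |p j| - |y j| = if j = i then p i else 0 := by
      intro j; by_cases h : j = i <;> simp [hy, h, abs_of_pos hpi]
    simp [this]
  have hsq : (∑ j, (p j) ^ 2) - (∑ j, (y j) ^ 2) = (p i) ^ 2 := by
    rw [← Finset.sum_sub_distrib]
    have : ∀ j, (p j) ^ 2 - (y j) ^ 2 = if j = i then (p i) ^ 2 else 0 := by
      intro j; by_cases h : j = i <;> simp [hy, h]
    simp [this]
  have hTnonneg : (0:ℝ) ≤ ∑ j, (y j) ^ 2 :=
    Finset.sum_nonneg fun j _ => sq_nonneg _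
  have hlt : ∑ j, (y j) ^ 2 < ∑ j, (p j) ^ 2 := by
    nlinarith [sq_nonneg (p i), hsq, hpi]
  have hsqrtlt : Real.sqrt (∑ j, (y j) ^ 2) < Real.sqrt (∑ j, (p j) ^ 2) :=
    Real.sqrt_lt_sqrt hTnonneg hlt
  have hNy := h1 y
  have key : p i < φ i * p i := by
    have hNp := hN p
    have hNy' := hN y
    nlinarith [hsum1, habs, hsqrtlt]
  exact (lt_mul_iff_one_lt_left hpi).mp key

/-- In `ℝ^n` with the norm `N(x) = ‖x‖₁ + λ‖x‖₂`, `0 < λ ≤ 1`: if `p` and `q` are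
nonzero vectors with a common coordinate `i` where `p(i) > 0` and `q(i) > 0`, then for
any norming functional `φ` of `p` and any norming functional `ψ` of `q`, the dual norm
of `φ + ψ` is strictly greater than `1` (so `φ + ψ` lies outside the dual unit ball). -/
theorem sum_of_norming_functionals_outside_dual_ball
    (n : ℕ) (hn : 1 ≤ n) (lam : ℝ) (hlam0 : 0 < lam) (hlam1 : lam ≤ 1)
    (N : (Fin n → ℝ) → ℝ)
    (hN : ∀ x, N x = (∑ i, |x i|) + lam * Real.sqrt (∑ i, (x i) ^ 2))
    (p q : Fin n → ℝ) (hp : p ≠ 0) (hq : q ≠ 0)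
    (i : Fin n) (hpi : 0 < p i) (hqi : 0 < q i)
    (φ ψ : Fin n → ℝ)
    (hφ : (∀ x, (∑ j, φ j * x j) ≤ N x) ∧ (∑ j, φ j * p j) = N p)
    (hψ : (∀ x, (∑ j, ψ j * x j) ≤ N x) ∧ (∑ j, ψ j * q j) = N q) :
    ∃ x : Fin n → ℝ, N x = 1 ∧ 1 < ∑ j, (φ j + ψ j) * x j := by
  have hφi : 1 < φ i := norming_coord_gt_one n lam hlam0 N hN p i hpi φ hφ.1 hφ.2
  have hψi : 1 < ψ i := norming_coord_gt_one n lam hlam0 N hN q i hqi ψ hψ.1 hψ.2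
  have h1lam : (0:ℝ) < 1 + lam := by linarith
  refine ⟨fun j => if j = i then (1 + lam)⁻¹ else 0, ?_, ?_⟩
  · rw [hN]
    have habs : (∑ j, |if j = i then (1 + lam)⁻¹ else 0|) = (1 + lam)⁻¹ := by
      have : ∀ j, |if j = i then (1 + lam)⁻¹ else 0| =
          if j = i then (1 + lam)⁻¹ else 0 := by
        intro j; by_cases h : j = i <;> simp [h, abs_of_nonneg (le_of_lt (inv_pos.mpr h1lam))]
      simp [this]
    have hsq : (∑ j, (if j = i then (1 + lam)⁻¹ else 0) ^ 2) = ((1 + lam)⁻¹) ^ 2 := by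
      have : ∀ j, (if j = i then (1 + lam)⁻¹ else 0) ^ 2 =
          if j = i then ((1 + lam)⁻¹) ^ 2 else 0 := by
        intro j; by_cases h : j = i <;> simp [h]
      simp [this]
    rw [habs, hsq, Real.sqrt_sq (le_of_lt (inv_pos.mpr h1lam))]
    field_simp
  · have : (∑ j, (φ j + ψ j) * if j = i then (1 + lam)⁻¹ else 0)
        = (φ i + ψ i) * (1 + lam)⁻¹ := by
      have : ∀ j, (φ j + ψ j) * (if j = i then (1 + lam)⁻¹ else 0) =
          if j = i then (φ i + ψ i) * (1 + lam)⁻¹ else 0 := by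
        intro j; by_cases h : j = i <;> simp [h]
      simp [this]
    rw [this, ← div_eq_mul_inv, lt_div_iff₀ h1lam]
    linarith
end
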